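/- Let G be a connected graph on n vertices, x a vertex of G with exactly three neighbors, y and z two distinct neighbors of x, and c ≥ 0 an integer; let G' be the associated terminal-augmented graph with terminals s and t. Then G has a Hamiltonian cycle if and only if G' contains an st-path P with |V(P)| ≤ n + 2 and |N_{G'}(V(P))| ≤ c. -/

import Mathlib

open SimpleGraph

/-- The open neighborhood of a vertex set `S`: vertices outside `S` adjacent to some
vertex of `S`. -/
def openNbhd {V : Type*} (G : SimpleGraph V) (S : Set V) : Set V :=
  {v | v ∉ S ∧ ∃ w ∈ S, G.Adj v w}

/-- The terminal-augmented graph `G'` of `(G, x, y, z, c)`: a new vertex `s`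
(modelled as `Sum.inr (Sum.inl ())`) adjacent exactly to `x`, a new vertex `t`
(modelled as `Sum.inr (Sum.inr (Sum.inl ()))`) adjacent exactly to `y` and `z`,
and `c` new vertices (the set `Z`, modelled as `Sum.inr (Sum.inr (Sum.inr i))`)
each adjacent exactly to `s`. -/
def termAug {V : Type*} (G : SimpleGraph V) (x y z : V) (c : ℕ) :
    SimpleGraph (V ⊕ (Unit ⊕ Unit ⊕ Fin c)) :=
  SimpleGraph.fromRel (fun a b =>
    match a, b with
    | Sum.inl v, Sum.inl w => G.Adj v w
    | Sum.inl v, Sum.inr (Sum.inl _) => v = x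
    | Sum.inl v, Sum.inr (Sum.inr (Sum.inl _)) => v = y ∨ v = z
    | Sum.inr (Sum.inl _), Sum.inr (Sum.inr (Sum.inr _)) => True
    | _, _ => False)

/-- The terminal `s` of the terminal-augmented graph. -/
def sVert (V : Type*) (c : ℕ) : V ⊕ (Unit ⊕ Unit ⊕ Fin c) := Sum.inr (Sum.inl ())

/-- The terminal `t` of the terminal-augmented graph. -/
def tVert (V : Type*) (c : ℕ) : V ⊕ (Unit ⊕ Unit ⊕ Fin c) := Sum.inr (Sum.inr (Sum.inl ()))

/-- `G` has a Hamiltonian cycle. -/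
def HasHamiltonianCycle {V : Type*} [DecidableEq V] (G : SimpleGraph V) : Prop :=
  ∃ (v : V) (p : G.Walk v v), p.IsHamiltonianCycle

/-! A Hamiltonian cycle of `G` leaves `x` towards two distinct neighbours, and since `x` has
degree three one of them is `y` or `z`; the rest of the cycle is a Hamiltonian path from `x` to
it, which together with `s` and `t` is an `st`-path on `n + 2` vertices whose neighbourhood is `Z`.

Conversely, the vertices of `Z` are pendant at `s`, so an `st`-path `P` avoids them and all of
them lie in `N(V(P))`. The bound `|N(V(P))| ≤ c` forces `N(V(P)) = Z`, so no vertex of `G` is a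
neighbour of `V(P)`, and by connectivity `P` passes through all of `G`. Its interior is then a
Hamiltonian path of `G` from `x` to `y` or `z`, closed into a Hamiltonian cycle by the edge back
to `x`. -/

namespace SimpleGraph

variable {α β : Type*} {G : SimpleGraph α} {H : SimpleGraph β}

lemma mem_pair_or_mem_pair_of_ncard_neighborSet_eq_three {x y z a b : α}
    (hx : (G.neighborSet x).ncard = 3) (hy : G.Adj x y) (hz : G.Adj x z) (hyz : y ≠ z)
    (ha : G.Adj x a) (hb : G.Adj x b) (hab : a ≠ b) :
    (a = y ∨ a = z) ∨ (b = y ∨ b = z) := by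
  have hfin : (G.neighborSet x).Finite := Set.finite_of_ncard_ne_zero (by omega)
  have hrest : (G.neighborSet x \ {y, z}).ncard = 1 := by
    rw [Set.ncard_sdiff (Set.pair_subset hy hz : {y, z} ⊆ G.neighborSet x), hx,
      Set.ncard_pair hyz]
  by_contra! h
  exact hab <| (Set.ncard_le_one_iff (hfin.sdiff)).mp hrest.le
    ⟨ha, by simp [h.1.1, h.1.2]⟩ ⟨hb, by simp [h.2.1, h.2.2]⟩

lemma three_lt_card_of_ncard_neighborSet_eq_three [Fintype α] {x : α}
    (hx : (G.neighborSet x).ncard = 3) : 3 < Fintype.card α := by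
  rw [← hx, ← Nat.card_eq_fintype_card]
  exact Set.ncard_lt_card fun h => G.irrefl (show x ∈ G.neighborSet x from h ▸ Set.mem_univ x)

lemma openNbhd_preimage_subset (f : G ↪g H) (S : Set β) :
    openNbhd G (f ⁻¹' S) ⊆ f ⁻¹' openNbhd H S :=
  fun _ ⟨hv, w, hw, hvw⟩ => ⟨hv, f w, hw, f.map_adj_iff.mpr hvw⟩

lemma Connected.eq_univ_of_openNbhd_eq_empty (hG : G.Connected) {S : Set α}
    (hS : S.Nonempty) (h : openNbhd G S = ∅) : S = Set.univ := by
  by_contra hne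
  obtain ⟨v, hv⟩ := (Set.ne_univ_iff_exists_notMem S).mp hne
  obtain ⟨w, hw⟩ := hS
  obtain ⟨d, -, hd, hd'⟩ := (hG.preconnected w v).some.exists_boundary_dart S hw hv
  exact h.subset ⟨hd', d.fst, hd, d.adj.symm⟩

namespace Walk

lemma exists_eq_cons_concat {u v : α} (p : G.Walk u v) (huv : u ≠ v) (hadj : ¬ G.Adj u v) :
    ∃ (a b : α) (ha : G.Adj u a) (q : G.Walk a b) (hb : G.Adj b v),
      p = cons ha (q.concat hb) := by
  cases p with
  | nil => exact absurd rfl huv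
  | cons ha p =>
    cases p with
    | nil => exact absurd ha hadj
    | cons h p =>
      obtain ⟨b, q, hb, he⟩ := exists_cons_eq_concat h p
      exact ⟨_, b, ha, q, hb, by rw [he]⟩

lemma exists_mem_support_adj_of_ne_start {u v w : α} (p : G.Walk u v) (hw : w ∈ p.support)
    (hwu : w ≠ u) : ∃ a ∈ p.support, G.Adj a w := by
  induction p with
  | nil => exact absurd (List.mem_singleton.mp hw) hwu
  | @cons u m _ h p ih =>
    rw [support_cons, List.mem_cons] at hw
    by_cases hwm : w = m
    · exact ⟨u, p.support.mem_cons_self, hwm ▸ h⟩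
    · obtain ⟨a, ha, haw⟩ := ih (hw.resolve_left hwu) hwm
      exact ⟨a, List.mem_cons_of_mem _ ha, haw⟩

/-- An interior vertex adjacent only to the start would have the start both before and
after it on the path. -/
lemma IsPath.eq_end_of_forall_adj_eq_start {u v w : α} {p : G.Walk u v} (hp : p.IsPath)
    (hw : w ∈ p.support) (hwu : w ≠ u) (hadj : ∀ a, G.Adj w a → a = u) : w = v := by
  cases p with
  | nil => exact absurd (List.mem_singleton.mp hw) hwu
  | cons h p =>
    rw [cons_isPath_iff] at hp
    rw [support_cons, List.mem_cons] at hw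
    by_contra hwv
    obtain ⟨a, ha, haw⟩ := p.reverse.exists_mem_support_adj_of_ne_start
      (by simpa using hw.resolve_left hwu) hwv
    exact hp.2 (hadj a haw.symm ▸ by simpa using ha)

lemma exists_support_map_eq_of_subset_range (f : G ↪g H) {u v : β} (p : H.Walk u v)
    (hp : ∀ w ∈ p.support, w ∈ Set.range f) {a b : α} (ha : f a = u) (hb : f b = v) :
    ∃ q : G.Walk a b, q.support.map f = p.support := by
  induction p generalizing a with
  | nil =>
    subst ha
    obtain rfl := f.injective hb
    exact ⟨nil, rfl⟩
  | @cons u m v h p ih =>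
    subst ha
    obtain ⟨m₀, rfl⟩ := hp m (by simp)
    obtain ⟨q, hq⟩ := ih (fun w hw => hp w (List.mem_cons_of_mem _ hw)) rfl hb
    exact ⟨cons (f.map_adj_iff.mp h) q, by simp [hq]⟩

variable [DecidableEq α]

lemma IsHamiltonian.reverse {u v : α} {p : G.Walk u v} (hp : p.IsHamiltonian) :
    p.reverse.IsHamiltonian := fun a => by
  simpa [support_reverse, List.count_reverse] using hp a

lemma IsHamiltonianCycle.reverse {u : α} {p : G.Walk u u} (hp : p.IsHamiltonianCycle) :
    p.reverse.IsHamiltonianCycle := by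
  have := hp.finite
  cases nonempty_fintype α
  rw [isHamiltonianCycle_iff_isCycle_and_length_eq] at hp ⊢
  exact ⟨hp.1.reverse, by rw [length_reverse, hp.2]⟩

lemma IsHamiltonian.isHamiltonianCycle_cons [Fintype α] {u v : α} {p : G.Walk u v}
    (hp : p.IsHamiltonian) (h : G.Adj v u) (hcard : 3 ≤ Fintype.card α) :
    (cons h p).IsHamiltonianCycle := by
  have hlen := hp.length_eq
  rw [isHamiltonianCycle_iff_isCycle_and_length_eq, isCycle_iff_isPath_tail_and_le_length]
  refine ⟨⟨by simpa [tail_cons] using hp.isPath, by simp; omega⟩, by simp; omega⟩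

end Walk

end SimpleGraph

namespace termAug

open SimpleGraph Walk

variable {V : Type*} {G : SimpleGraph V} {x y z : V} {c : ℕ}

def zVert (V : Type*) {c : ℕ} (i : Fin c) : V ⊕ (Unit ⊕ Unit ⊕ Fin c) :=
  Sum.inr (Sum.inr (Sum.inr i))

lemma adj_inl_inl {v w : V} : (termAug G x y z c).Adj (.inl v) (.inl w) ↔ G.Adj v w := by
  simp only [termAug, fromRel_adj, ne_eq, Sum.inl.injEq, G.adj_comm w, or_self]
  exact ⟨And.right, fun h => ⟨h.ne, h⟩⟩

lemma sVert_adj_iff {u : V ⊕ (Unit ⊕ Unit ⊕ Fin c)} :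
    (termAug G x y z c).Adj (sVert V c) u ↔ u = .inl x ∨ ∃ i, u = zVert V i := by
  rcases u with v | (_ | _ | i) <;> simp [termAug, sVert, zVert, eq_comm]

lemma adj_tVert_iff {u : V ⊕ (Unit ⊕ Unit ⊕ Fin c)} :
    (termAug G x y z c).Adj u (tVert V c) ↔ u = .inl y ∨ u = .inl z := by
  rcases u with v | (_ | _ | i) <;> simp [termAug, tVert]

lemma zVert_adj_iff {i : Fin c} {u : V ⊕ (Unit ⊕ Unit ⊕ Fin c)} :
    (termAug G x y z c).Adj (zVert V i) u ↔ u = sVert V c := by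
  rcases u with v | (_ | _ | j) <;> simp [termAug, sVert, zVert]

lemma sVert_adj_zVert (i : Fin c) : (termAug G x y z c).Adj (sVert V c) (zVert V i) :=
  sVert_adj_iff.mpr (.inr ⟨i, rfl⟩)

lemma eq_inl_or_sVert_or_tVert_or_zVert (u : V ⊕ (Unit ⊕ Unit ⊕ Fin c)) :
    (∃ v, u = .inl v) ∨ u = sVert V c ∨ u = tVert V c ∨ ∃ i, u = zVert V i := by
  rcases u with v | (_ | _ | i)
  exacts [.inl ⟨v, rfl⟩, .inr (.inl rfl), .inr (.inr (.inl rfl)),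
    .inr (.inr (.inr ⟨i, rfl⟩))]

lemma ncard_range_zVert : (Set.range (zVert V (c := c))).ncard = c := by
  rw [Set.ncard_range_of_injective (fun i j h => by simpa [zVert] using h),
    Nat.card_eq_fintype_card, Fintype.card_fin]

def inlEmbedding : G ↪g termAug G x y z c :=
  ⟨⟨Sum.inl, Sum.inl_injective⟩, adj_inl_inl⟩

@[simp] lemma coe_inlEmbedding : ⇑(inlEmbedding : G ↪g termAug G x y z c) = Sum.inl := rfl

section Forward

variable {a : V} (Q : G.Walk x a)

def extendWalk (ha : a = y ∨ a = z) : (termAug G x y z c).Walk (sVert V c) (tVert V c) :=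
  cons (v := inlEmbedding.toHom x) (sVert_adj_iff.mpr (.inl rfl))
    ((Q.map inlEmbedding.toHom).concat (adj_tVert_iff.mpr (by simpa using ha)))

lemma support_extendWalk (ha : a = y ∨ a = z) :
    (extendWalk Q ha (c := c)).support = sVert V c :: (Q.support.map Sum.inl ++ [tVert V c]) := by
  rw [extendWalk, support_cons, support_concat, Walk.support_map]
  simp

variable {Q}

lemma isPath_extendWalk (hQ : Q.IsPath) (ha : a = y ∨ a = z) :
    (extendWalk Q ha (c := c)).IsPath := by
  rw [isPath_def, support_extendWalk]
  simp [List.nodup_append, List.nodup_map_iff Sum.inl_injective, hQ.support_nodup, sVert, tVert]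

variable [DecidableEq V] [Fintype V]

lemma exists_isPath_of_isHamiltonian (hQ : Q.IsHamiltonian) (ha : a = y ∨ a = z) :
    ∃ p : (termAug G x y z c).Walk (sVert V c) (tVert V c), p.IsPath ∧
      p.support.length ≤ Fintype.card V + 2 ∧
      (openNbhd (termAug G x y z c) {a | a ∈ p.support}).ncard ≤ c := by
  have hmem : ∀ u, u ∉ (extendWalk Q ha (c := c)).support → u ∈ Set.range (zVert V) := by
    intro u hu
    rcases eq_inl_or_sVert_or_tVert_or_zVert u with ⟨v, rfl⟩ | rfl | rfl | ⟨i, rfl⟩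
    · simp [support_extendWalk, hQ.mem_support] at hu
    · exact absurd (start_mem_support _) hu
    · exact absurd (end_mem_support _) hu
    · exact ⟨i, rfl⟩
  refine ⟨extendWalk Q ha, isPath_extendWalk hQ.isPath ha, ?_, ?_⟩
  · simp [support_extendWalk, hQ.length_support]
  · calc _ ≤ (Set.range (zVert V (c := c))).ncard :=
          Set.ncard_le_ncard (fun u hu => hmem u hu.1)
      _ = c := ncard_range_zVert

end Forward

section Backward

variable {p : (termAug G x y z c).Walk (sVert V c) (tVert V c)}

lemma zVert_notMem_support (hp : p.IsPath) (i : Fin c) : zVert V i ∉ p.support := fun hi =>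
  absurd (hp.eq_end_of_forall_adj_eq_start hi (by simp [zVert, sVert]) fun _ => zVert_adj_iff.mp)
    (by simp [zVert, tVert])

lemma openNbhd_support_eq_range_zVert [Fintype V] (hp : p.IsPath)
    (hc : (openNbhd (termAug G x y z c) {a | a ∈ p.support}).ncard ≤ c) :
    openNbhd (termAug G x y z c) {a | a ∈ p.support} = Set.range (zVert V) := by
  refine (Set.eq_of_subset_of_ncard_le ?_ (ncard_range_zVert ▸ hc)).symm
  rintro _ ⟨i, rfl⟩
  exact ⟨zVert_notMem_support hp i, sVert V c, p.start_mem_support, (sVert_adj_zVert i).symm⟩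

lemma inl_mem_of_openNbhd_subset_range_zVert (hG : G.Connected)
    {S : Set (V ⊕ (Unit ⊕ Unit ⊕ Fin c))} (hS : ∃ v, Sum.inl v ∈ S)
    (h : openNbhd (termAug G x y z c) S ⊆ Set.range (zVert V)) (v : V) : Sum.inl v ∈ S := by
  have : openNbhd G (Sum.inl ⁻¹' S) = ∅ := Set.eq_empty_of_forall_notMem fun w hw => by
    obtain ⟨i, hi⟩ := h (openNbhd_preimage_subset inlEmbedding S hw)
    simp [zVert] at hi
  exact (hG.eq_univ_of_openNbhd_eq_empty hS this).ge (Set.mem_univ v)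

lemma exists_isHamiltonian_of_isPath [Fintype V] [DecidableEq V] (hG : G.Connected)
    (hp : p.IsPath) (hc : (openNbhd (termAug G x y z c) {a | a ∈ p.support}).ncard ≤ c) :
    ∃ b, (b = y ∨ b = z) ∧ ∃ Q : G.Walk x b, Q.IsHamiltonian := by
  have hZ := zVert_notMem_support hp
  obtain ⟨a, b, hsa, q, hbt, rfl⟩ := p.exists_eq_cons_concat (by simp [sVert, tVert])
    (by simp [sVert_adj_iff, tVert, zVert])
  obtain rfl : a = .inl x := (sVert_adj_iff.mp hsa).resolve_right <| by
    rintro ⟨i, rfl⟩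
    exact hZ i (by simp)
  obtain ⟨b, hb, rfl⟩ : ∃ b₀, (b₀ = y ∨ b₀ = z) ∧ b = .inl b₀ := by
    rcases adj_tVert_iff.mp hbt with rfl | rfl
    exacts [⟨y, .inl rfl, rfl⟩, ⟨z, .inr rfl, rfl⟩]
  have hV := inl_mem_of_openNbhd_subset_range_zVert hG ⟨x, by simp⟩
    (openNbhd_support_eq_range_zVert hp hc).subset
  rw [cons_isPath_iff, concat_isPath_iff, support_concat] at hp
  obtain ⟨⟨hq, htq⟩, hsq⟩ := hp
  have hrange : ∀ w ∈ q.support, w ∈ Set.range Sum.inl := by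
    intro w hw
    rcases eq_inl_or_sVert_or_tVert_or_zVert w with ⟨v, rfl⟩ | rfl | rfl | ⟨i, rfl⟩
    · exact ⟨v, rfl⟩
    · exact absurd (by simp [hw]) hsq
    · exact absurd hw htq
    · exact absurd (by simp [support_concat, hw]) (hZ i)
  obtain ⟨Q, hQ⟩ := exists_support_map_eq_of_subset_range inlEmbedding q hrange rfl rfl
  refine ⟨b, hb, Q, IsPath.isHamiltonian_of_mem ?_ fun v => ?_⟩
  · rw [isPath_def, ← List.nodup_map_iff Sum.inl_injective]
    exact hQ ▸ hq.support_nodup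
  · have hv := hV v
    rw [Set.mem_ofPred_eq, support_cons, support_concat] at hv
    simpa [← hQ, sVert, tVert] using hv

end Backward

end termAug

namespace SimpleGraph

variable {V : Type*} [DecidableEq V] {G : SimpleGraph V} {x y z : V}

lemma exists_isHamiltonian_of_hasHamiltonianCycle (hx : (G.neighborSet x).ncard = 3)
    (hy : G.Adj x y) (hz : G.Adj x z) (hyz : y ≠ z) (h : HasHamiltonianCycle G) :
    ∃ a, (a = y ∨ a = z) ∧ ∃ Q : G.Walk x a, Q.IsHamiltonian := by
  obtain ⟨v, C, hC⟩ := h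
  have hCx := hC.rotate (hC.mem_support x)
  set C' := C.rotate x (hC.mem_support x)
  have hC'x := hCx.reverse
  rcases mem_pair_or_mem_pair_of_ncard_neighborSet_eq_three hx hy hz hyz (C'.adj_snd hCx.not_nil)
    (C'.reverse.adj_snd hC'x.not_nil) (by rw [Walk.snd_reverse]; exact hCx.snd_ne_penultimate)
    with h | h
  · exact ⟨_, h, C'.tail.reverse, hCx.isHamiltonian_tail.reverse⟩
  · exact ⟨_, h, C'.reverse.tail.reverse, hC'x.isHamiltonian_tail.reverse⟩

end SimpleGraph

/-- `G` has a Hamiltonian cycle iff the terminal-augmented graph `G'` contains an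
`st`-path `P` with `|V(P)| ≤ n + 2` and `|N_{G'}(V(P))| ≤ c`. -/
theorem stmt_4 {V : Type*} [Fintype V] [DecidableEq V] (G : SimpleGraph V)
    (hG : G.Connected) (x y z : V) (hx : (G.neighborSet x).ncard = 3)
    (hy : G.Adj x y) (hz : G.Adj x z) (hyz : y ≠ z) (c : ℕ) :
    HasHamiltonianCycle G ↔
      ∃ p : (termAug G x y z c).Walk (sVert V c) (tVert V c), p.IsPath ∧
        p.support.length ≤ Fintype.card V + 2 ∧
        (openNbhd (termAug G x y z c) {a | a ∈ p.support}).ncard ≤ c := by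
  constructor
  · intro hC
    obtain ⟨a, ha, Q, hQ⟩ := exists_isHamiltonian_of_hasHamiltonianCycle hx hy hz hyz hC
    exact termAug.exists_isPath_of_isHamiltonian hQ ha
  · rintro ⟨p, hp, -, hc⟩
    obtain ⟨b, hb, Q, hQ⟩ := termAug.exists_isHamiltonian_of_isPath hG hp hc
    have hbx : G.Adj b x := by rcases hb with rfl | rfl; exacts [hy.symm, hz.symm]
    have hcard := three_lt_card_of_ncard_neighborSet_eq_three hx
    exact ⟨b, _, hQ.isHamiltonianCycle_cons hbx hcard.le⟩
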